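/- The reality condition for the quantum Hodge operator: given nonzero complex numbers α, β, γ and nonzero m ∈ ℝ, one has T(x*) = (T(x))* for all x ∈ Λ¹ if and only if β = q⁶ · conj(α) and γ ∈ ℝ. -/

import Mathlib

open TensorProduct

noncomputable section

/-- The 3-dimensional complex vector space with basis `ω 0 = ω₋`, `ω 1 = ω₊`, `ω 2 = ω_z`. -/
abbrev V : Type := Fin 3 → ℂ

/-- The distinguished basis `(ω₋, ω₊, ω_z)` of `V`. -/
def ω : Fin 3 → V := fun i => Pi.basisFun ℂ (Fin 3) i

/-- The degree-2 relations of the exterior algebra of the 3d calculus: each generator is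
set equal to `0`.  `RingQuot` of this relation is the quotient of the tensor algebra by the
two-sided ideal generated by the six elements. -/
inductive rel (q : ℝ) : TensorAlgebra ℂ V → TensorAlgebra ℂ V → Prop
  | mm : rel q (TensorAlgebra.ι ℂ (ω 0) * TensorAlgebra.ι ℂ (ω 0)) 0
  | pp : rel q (TensorAlgebra.ι ℂ (ω 1) * TensorAlgebra.ι ℂ (ω 1)) 0
  | zz : rel q (TensorAlgebra.ι ℂ (ω 2) * TensorAlgebra.ι ℂ (ω 2)) 0
  | mp : rel q (TensorAlgebra.ι ℂ (ω 0) * TensorAlgebra.ι ℂ (ω 1) +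
      ((q : ℂ) ^ 2)⁻¹ • (TensorAlgebra.ι ℂ (ω 1) * TensorAlgebra.ι ℂ (ω 0))) 0
  | zm : rel q (TensorAlgebra.ι ℂ (ω 2) * TensorAlgebra.ι ℂ (ω 0) +
      (q : ℂ) ^ 4 • (TensorAlgebra.ι ℂ (ω 0) * TensorAlgebra.ι ℂ (ω 2))) 0
  | zp : rel q (TensorAlgebra.ι ℂ (ω 2) * TensorAlgebra.ι ℂ (ω 1) +
      ((q : ℂ) ^ 4)⁻¹ • (TensorAlgebra.ι ℂ (ω 1) * TensorAlgebra.ι ℂ (ω 2))) 0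

/-- The exterior algebra `Λ` of the 3d calculus. -/
abbrev Lam (q : ℝ) : Type := RingQuot (rel q)

/-- The quotient map `T(V) → Λ`. -/
def mkL (q : ℝ) : TensorAlgebra ℂ V →ₐ[ℂ] Lam q := RingQuot.mkAlgHom ℂ (rel q)

/-- The degree-`k` component `Λᵏ` of `Λ`: the image of the `k`-th power of the degree-1
part of the tensor algebra (the grading induced from the tensor algebra). -/
def gradeL (q : ℝ) (k : ℕ) : Submodule ℂ (Lam q) :=
  Submodule.map (mkL q).toLinearMap
    ((LinearMap.range (TensorAlgebra.ι ℂ : V →ₗ[ℂ] TensorAlgebra ℂ V)) ^ k)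

/-- The images `ω₋, ω₊, ω_z` of the basis 1-forms in `Λ¹`. -/
def ωL (q : ℝ) (a : Fin 3) : Lam q := mkL q (TensorAlgebra.ι ℂ (ω a))

/-- `f₋ = ω₋∧ω_z ∈ Λ²`. -/
def fm (q : ℝ) : Lam q := mkL q (TensorAlgebra.ι ℂ (ω 0) * TensorAlgebra.ι ℂ (ω 2))

/-- `f₊ = ω₊∧ω_z ∈ Λ²`. -/
def fp (q : ℝ) : Lam q := mkL q (TensorAlgebra.ι ℂ (ω 1) * TensorAlgebra.ι ℂ (ω 2))

/-- `f_z = ω₋∧ω₊ ∈ Λ²`. -/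
def fz (q : ℝ) : Lam q := mkL q (TensorAlgebra.ι ℂ (ω 0) * TensorAlgebra.ι ℂ (ω 1))

/-- The top form `θ = ω₋∧ω₊∧ω_z ∈ Λ³`. -/
def θL (q : ℝ) : Lam q :=
  mkL q (TensorAlgebra.ι ℂ (ω 0) * TensorAlgebra.ι ℂ (ω 1) * TensorAlgebra.ι ℂ (ω 2))

/-- `λ₂ = 1 + q²`. -/
def lam2 (q : ℝ) : ℂ := 1 + (q : ℂ) ^ 2

/-- `λ₃ = 1 + 2q² + 2q⁴ + q⁶`. -/
def lam3 (q : ℝ) : ℂ := 1 + 2 * (q : ℂ) ^ 2 + 2 * (q : ℂ) ^ 4 + (q : ℂ) ^ 6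

/-- `T : Λ → Λ` is the Hodge operator of the left-invariant contraction
`g(ω₋,ω₊) = α`, `g(ω₊,ω₋) = β`, `g(ω_z,ω_z) = γ` with volume form `μ = mθ`: these
equations pin down `T` on the basis `1, ω₋, ω₊, ω_z, f₋, f₊, f_z, θ` of `Λ`. -/
def IsHodge (q : ℝ) (α β γ m : ℂ) (T : Lam q →ₗ[ℂ] Lam q) : Prop :=
  T 1 = m • θL q ∧
  T (ωL q 0) = (-(((q : ℂ) ^ 2)⁻¹ * m * β)) • fm q ∧
  T (ωL q 1) = (m * α) • fp q ∧
  T (ωL q 2) = (m * γ) • fz q ∧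
  T (fm q) = (2 * ((q : ℂ) ^ 4)⁻¹ * (lam2 q)⁻¹ * m * β * γ) • ωL q 0 ∧
  T (fp q) = (-(2 * (q : ℂ) ^ 6 * (lam2 q)⁻¹ * m * α * γ)) • ωL q 1 ∧
  T (fz q) = (-(2 * (lam2 q)⁻¹ * m * α * β)) • ωL q 2 ∧
  T (θL q) = (-(6 * (q : ℂ) ^ 4 * (lam3 q)⁻¹ * m * α * β * γ)) • (1 : Lam q)

/-- `st : Λ → Λ` is the antilinear involution determined by the `*`-structure of the
calculus: these equations pin down `st` on the basis `1, ω₋, ω₊, ω_z, f₋, f₊, f_z, θ`. -/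
def IsStar (q : ℝ) (st : Lam q →ₛₗ[starRingEnd ℂ] Lam q) : Prop :=
  st 1 = 1 ∧
  st (ωL q 0) = -ωL q 1 ∧
  st (ωL q 1) = -ωL q 0 ∧
  st (ωL q 2) = -ωL q 2 ∧
  st (fm q) = ((q : ℂ) ^ 4)⁻¹ • fp q ∧
  st (fp q) = (q : ℂ) ^ 4 • fm q ∧
  st (fz q) = -fz q ∧
  st (θL q) = θL q

/-!
`Λ¹` is spanned by `ω₋, ω₊, ω_z`, and `T ∘ *` and `* ∘ T` are both antilinear, so the reality
condition need only be checked on these three forms. There it compares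
`T(ω₋*) = −mα f₊` with `T(ω₋)* = −q⁻⁶ m conj(β) f₊`, `T(ω₊*) = q⁻² mβ f₋` with
`T(ω₊)* = q⁴ m conj(α) f₋` (both amount to `β = q⁶ conj(α)`, as `m` is real), and
`T(ω_z*) = −mγ f_z` with `T(ω_z)* = −m conj(γ) f_z`.

Comparing coefficients needs `f₋, f₊, f_z ≠ 0`. This is read off from a Jordan–Wigner
representation of `Λ` on `(ℂ²)^{⊗3}`: `ω₋ ↦ e ⊗ 1 ⊗ 1`, `ω₊ ↦ d(a) ⊗ e ⊗ 1`,
`ω_z ↦ d(b) ⊗ d(c) ⊗ e`, with `e² = 0` and `d(c)` the diagonal twist `diag(1, c)`, so that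
the three generators square to zero and commute up to the scalars `a, b, c`.
-/

open Kronecker

namespace JordanWigner

def e : Matrix (Fin 2) (Fin 2) ℂ := !![0, 1; 0, 0]

def d (c : ℂ) : Matrix (Fin 2) (Fin 2) ℂ := !![1, 0; 0, c]

lemma e_mul_e : e * e = 0 := by
  ext i j; fin_cases i <;> fin_cases j <;> simp [e]

lemma d_mul_e (c : ℂ) : d c * e = e := by
  simp [d, e]

lemma e_mul_d (c : ℂ) : e * d c = c • e := by
  ext i j; fin_cases i <;> fin_cases j <;> simp [d, e]

lemma d_mul_d (b c : ℂ) : d b * d c = d (b * c) := by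
  simp [d]

abbrev Index : Type := (Fin 2 × Fin 2) × Fin 2

def xm : Matrix Index Index ℂ := (e ⊗ₖ 1) ⊗ₖ 1

def xp (a : ℂ) : Matrix Index Index ℂ := (d a ⊗ₖ e) ⊗ₖ 1

def xz (b c : ℂ) : Matrix Index Index ℂ := (d b ⊗ₖ d c) ⊗ₖ e

variable (a b c : ℂ)

attribute [local simp] Matrix.smul_kronecker Matrix.kronecker_smul Matrix.zero_kronecker
  Matrix.kronecker_zero e_mul_e d_mul_e e_mul_d d_mul_d

lemma xm_mul_xm : xm * xm = 0 := by
  simp [xm, ← Matrix.mul_kronecker_mul]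

lemma xp_mul_xp : xp a * xp a = 0 := by
  simp [xp, ← Matrix.mul_kronecker_mul]

lemma xz_mul_xz : xz b c * xz b c = 0 := by
  simp [xz, ← Matrix.mul_kronecker_mul]

lemma xm_mul_xp : xm * xp a = a • (xp a * xm) := by
  simp [xm, xp, ← Matrix.mul_kronecker_mul]

lemma xm_mul_xz : xm * xz b c = b • (xz b c * xm) := by
  simp [xm, xz, ← Matrix.mul_kronecker_mul]

lemma xp_mul_xz : xp a * xz b c = c • (xz b c * xp a) := by
  simp [xp, xz, ← Matrix.mul_kronecker_mul, mul_comm a b]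

variable {a b c}

lemma xm_mul_xp_ne_zero (ha : a ≠ 0) : xm * xp a ≠ 0 := fun h => ha <| by
  simpa [xm, xp, ← Matrix.mul_kronecker_mul, e, d] using congr_fun₂ h ((0, 0), 0) ((1, 1), 0)

lemma xm_mul_xz_ne_zero (hb : b ≠ 0) : xm * xz b c ≠ 0 := fun h => hb <| by
  simpa [xm, xz, ← Matrix.mul_kronecker_mul, e, d] using congr_fun₂ h ((0, 0), 0) ((1, 0), 1)

lemma xp_mul_xz_ne_zero (hc : c ≠ 0) : xp a * xz b c ≠ 0 := fun h => hc <| by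
  simpa [xp, xz, ← Matrix.mul_kronecker_mul, e, d] using congr_fun₂ h ((0, 0), 0) ((0, 1), 1)

end JordanWigner

section Representation

open JordanWigner

variable {q : ℝ}

def ωMatrix (q : ℝ) : Fin 3 → Matrix Index Index ℂ :=
  ![xm, xp (-((q : ℂ) ^ 2)⁻¹), xz (-((q : ℂ) ^ 4)⁻¹) (-(q : ℂ) ^ 4)]

lemma ωMatrix_rel (hq : q ≠ 0) ⦃x y : TensorAlgebra ℂ V⦄ (h : rel q x y) :
    TensorAlgebra.lift ℂ ((Pi.basisFun ℂ (Fin 3)).constr ℂ (ωMatrix q)) x =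
      TensorAlgebra.lift ℂ ((Pi.basisFun ℂ (Fin 3)).constr ℂ (ωMatrix q)) y := by
  have hq' : (q : ℂ) ≠ 0 := by exact_mod_cast hq
  cases h <;>
    simp only [ω, map_mul, map_add, map_smul, map_zero, TensorAlgebra.lift_ι_apply,
      Module.Basis.constr_basis, ωMatrix, Matrix.cons_val]
  · exact xm_mul_xm
  · exact xp_mul_xp _
  · exact xz_mul_xz _ _
  · rw [xm_mul_xp]; match_scalars; ring
  · rw [xm_mul_xz]; match_scalars; field_simp; ring
  · rw [xp_mul_xz]; match_scalars; field_simp; ring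

def Lam.toMatrix (hq : q ≠ 0) : Lam q →ₐ[ℂ] Matrix Index Index ℂ :=
  RingQuot.liftAlgHom ℂ ⟨TensorAlgebra.lift ℂ ((Pi.basisFun ℂ (Fin 3)).constr ℂ (ωMatrix q)),
    ωMatrix_rel hq⟩

lemma Lam.toMatrix_ωL (hq : q ≠ 0) (i : Fin 3) : Lam.toMatrix hq (ωL q i) = ωMatrix q i := by
  rw [ωL, _root_.mkL, Lam.toMatrix, RingQuot.liftAlgHom_mkAlgHom_apply,
    TensorAlgebra.lift_ι_apply, ω, Module.Basis.constr_basis]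

lemma fm_ne_zero (hq : q ≠ 0) : fm q ≠ 0 := by
  refine ne_zero_of_map (f := Lam.toMatrix hq) ?_
  rw [show fm q = ωL q 0 * ωL q 2 from map_mul .., map_mul, Lam.toMatrix_ωL, Lam.toMatrix_ωL]
  exact xm_mul_xz_ne_zero (by simpa using hq)

lemma fp_ne_zero (hq : q ≠ 0) : fp q ≠ 0 := by
  refine ne_zero_of_map (f := Lam.toMatrix hq) ?_
  rw [show fp q = ωL q 1 * ωL q 2 from map_mul .., map_mul, Lam.toMatrix_ωL, Lam.toMatrix_ωL]
  exact xp_mul_xz_ne_zero (by simpa using hq)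

lemma fz_ne_zero (hq : q ≠ 0) : fz q ≠ 0 := by
  refine ne_zero_of_map (f := Lam.toMatrix hq) ?_
  rw [show fz q = ωL q 0 * ωL q 1 from map_mul .., map_mul, Lam.toMatrix_ωL, Lam.toMatrix_ωL]
  exact xm_mul_xp_ne_zero (by simpa using hq)

end Representation

lemma gradeL_one_eq_span (q : ℝ) : gradeL q 1 = Submodule.span ℂ (Set.range (ωL q)) := by
  rw [gradeL, pow_one, LinearMap.range_eq_map, ← (Pi.basisFun ℂ (Fin 3)).span_eq,
    Submodule.map_span, Submodule.map_span, ← Set.range_comp, ← Set.range_comp]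
  rfl

lemma comm_on_gradeL_one_iff {q : ℝ} (T : Lam q →ₗ[ℂ] Lam q)
    (st : Lam q →ₛₗ[starRingEnd ℂ] Lam q) :
    (∀ x ∈ gradeL q 1, T (st x) = st (T x)) ↔ ∀ i, T (st (ωL q i)) = st (T (ωL q i)) := by
  change gradeL q 1 ≤ LinearMap.eqLocus (T ∘ₛₗ st) (st ∘ₛₗ T) ↔ _
  rw [gradeL_one_eq_span, Submodule.span_le, Set.range_subset_iff]
  rfl

lemma neg_smul_eq_smul_iff {R M : Type*} [Ring R] [IsCancelMulZero R] [AddCommGroup M]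
    [Module R M] [Module.IsTorsionFree R M] {x : M} (hx : x ≠ 0) {a b : R} :
    -(a • x) = b • x ↔ -a = b := by
  rw [← neg_smul, (smul_left_injective R hx).eq_iff]

section Reality

variable {q : ℝ} {α β γ : ℂ} {m : ℝ} {T : Lam q →ₗ[ℂ] Lam q}
  {st : Lam q →ₛₗ[starRingEnd ℂ] Lam q}

lemma IsHodge.comm_star_ωL_zero_iff (hT : IsHodge q α β γ m T) (hst : IsStar q st)
    (hq : q ≠ 0) (hm : m ≠ 0) :
    T (st (ωL q 0)) = st (T (ωL q 0)) ↔ β = (q : ℂ) ^ 6 * (starRingEnd ℂ) α := by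
  have hq' : (q : ℂ) ≠ 0 := by exact_mod_cast hq
  have hm' : (m : ℂ) ≠ 0 := by exact_mod_cast hm
  rw [hst.2.1, map_neg, hT.2.2.1, hT.2.1, map_smulₛₗ, hst.2.2.2.2.1, smul_smul,
    neg_smul_eq_smul_iff (fp_ne_zero hq), ← (starRingEnd ℂ).injective.eq_iff (a := β)]
  simp only [map_neg, map_mul, map_inv₀, map_pow, Complex.conj_ofReal, Complex.conj_conj]
  field_simp
  rw [neg_inj, eq_comm]

lemma IsHodge.comm_star_ωL_one_iff (hT : IsHodge q α β γ m T) (hst : IsStar q st)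
    (hq : q ≠ 0) (hm : m ≠ 0) :
    T (st (ωL q 1)) = st (T (ωL q 1)) ↔ β = (q : ℂ) ^ 6 * (starRingEnd ℂ) α := by
  have hq' : (q : ℂ) ≠ 0 := by exact_mod_cast hq
  have hm' : (m : ℂ) ≠ 0 := by exact_mod_cast hm
  rw [hst.2.2.1, map_neg, hT.2.1, hT.2.2.1, map_smulₛₗ, hst.2.2.2.2.2.1, smul_smul,
    neg_smul_eq_smul_iff (fm_ne_zero hq)]
  simp only [neg_neg, map_mul, Complex.conj_ofReal]
  field_simp

lemma IsHodge.comm_star_ωL_two_iff (hT : IsHodge q α β γ m T) (hst : IsStar q st)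
    (hq : q ≠ 0) (hm : m ≠ 0) :
    T (st (ωL q 2)) = st (T (ωL q 2)) ↔ (starRingEnd ℂ) γ = γ := by
  have hm' : (m : ℂ) ≠ 0 := by exact_mod_cast hm
  rw [hst.2.2.2.1, map_neg, hT.2.2.2.1, map_smulₛₗ, hst.2.2.2.2.2.2.1, smul_neg,
    neg_inj, (smul_left_injective ℂ (fz_ne_zero hq)).eq_iff, map_mul, Complex.conj_ofReal,
    mul_right_inj' hm', eq_comm]

end Reality

theorem hodge_real_iff_general (q : ℝ) (hq0 : 0 < q)
    (α β γ : ℂ) (m : ℝ) (hm : m ≠ 0)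
    (T : Lam q →ₗ[ℂ] Lam q) (hT : IsHodge q α β γ (m : ℂ) T)
    (st : Lam q →ₛₗ[starRingEnd ℂ] Lam q) (hst : IsStar q st) :
    (∀ x ∈ gradeL q 1, T (st x) = st (T x)) ↔
      (β = (q : ℂ) ^ 6 * (starRingEnd ℂ) α ∧ (starRingEnd ℂ) γ = γ) := by
  rw [comm_on_gradeL_one_iff, Fin.forall_fin_succ, Fin.forall_fin_two, Fin.succ_zero_eq_one,
    Fin.succ_one_eq_two, hT.comm_star_ωL_zero_iff hst hq0.ne' hm,
    hT.comm_star_ωL_one_iff hst hq0.ne' hm, hT.comm_star_ωL_two_iff hst hq0.ne' hm, and_self_left]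

/-- the reality condition `T(x*) = (T(x))*` on `Λ¹` holds
if and only if `β = q⁶ conj(α)` and `γ ∈ ℝ`. -/
theorem hodge_real_iff (q : ℝ) (hq0 : 0 < q) (hq1 : q < 1)
    (α β γ : ℂ) (m : ℝ) (hα : α ≠ 0) (hβ : β ≠ 0) (hγ : γ ≠ 0) (hm : m ≠ 0)
    (T : Lam q →ₗ[ℂ] Lam q) (hT : IsHodge q α β γ (m : ℂ) T)
    (st : Lam q →ₛₗ[starRingEnd ℂ] Lam q) (hst : IsStar q st) :
    (∀ x ∈ gradeL q 1, T (st x) = st (T x)) ↔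
      (β = (q : ℂ) ^ 6 * (starRingEnd ℂ) α ∧ (starRingEnd ℂ) γ = γ) :=
  hodge_real_iff_general q hq0 α β γ m hm T hT st hst

end
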